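/- Let H be a nonempty well-matched stack history with no failed operations and concurrency k. Then for every partition state S1 of H: (1) the set of nonterminals of the form Push(v), Peek(v), or T(ε) that belong to M(S1, S2) for some partition state S2 ⊃ S1 has at most k + 1 elements; and (2) the set of nonterminals T(v) with v ∈ V that belong to M(S2, S1) for some partition state S2 ⊂ S1 has at most k elements. -/

import Mathlib

structure Operation (M V : Type) where
  id : ℕ
  method : M
  value : V
  tinv : ℚ
  tres : ℚ
deriving DecidableEq

def WellFormed {M V : Type} (H : Finset (Operation M V)) : Prop :=
  ∀ o ∈ H, o.tinv < o.tres

def IsPartitionState {M V : Type} (H S : Finset (Operation M V)) : Prop :=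
  S ⊆ H ∧ ∃ t : ℚ, ∀ o ∈ H, (o.tres < t → o ∈ S) ∧ (t < o.tinv → o ∉ S)

def IsLinearization {M V : Type} (X : Finset (Operation M V)) (ℓ : Operation M V → ℚ) : Prop :=
  Set.InjOn ℓ ↑X ∧ ∀ o ∈ X, o.tinv < ℓ o ∧ ℓ o < o.tres

/-- The set of all invocation and response times of `H`. -/
def histTimes {M V : Type} [DecidableEq M] [DecidableEq V]
    (H : Finset (Operation M V)) : Finset ℚ :=
  H.image (fun o => o.tinv) ∪ H.image (fun o => o.tres)

/-- Concurrency: the maximum over t ∈ 𝒯_H of the number of operations whose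
interval contains t. -/
def concurrency {M V : Type} [DecidableEq M] [DecidableEq V]
    (H : Finset (Operation M V)) : ℕ :=
  (histTimes H).sup (fun t => (H.filter (fun o => o.tinv ≤ t ∧ t ≤ o.tres)).card)

inductive StackOp (V : Type) : Type
  | push (v : V) : StackOp V
  | pop (v : V) : StackOp V
  | peek (v : V) : StackOp V
deriving DecidableEq

/-- Execution of stack sequences: `StackExec σ w σ'` holds when the sequence
`w` can be legally executed starting from stack `σ` (top at the head), ending
with stack `σ'`.  `push v` pushes `v`; `pop v` (resp. `peek v`) is enabled
only when the top is `v` and removes it (resp. leaves the stack unchanged). -/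
inductive StackExec {V : Type} : List V → List (StackOp V) → List V → Prop
  | nil (σ : List V) : StackExec σ [] σ
  | push {σ σ' : List V} {w : List (StackOp V)} (v : V) :
      StackExec (v :: σ) w σ' → StackExec σ (StackOp.push v :: w) σ'
  | pop {σ σ' : List V} {w : List (StackOp V)} (v : V) :
      StackExec σ w σ' → StackExec (v :: σ) (StackOp.pop v :: w) σ'
  | peek {σ σ' : List V} {w : List (StackOp V)} (v : V) :
      StackExec (v :: σ) w σ' → StackExec (v :: σ) (StackOp.peek v :: w) σ'

/-- The stack specification: sequences executable from the empty stack. -/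
def TStack (V : Type) : Set (List (StackOp V)) :=
  {w | ∃ σ : List V, StackExec [] w σ}

/-- Nonterminals of the stack grammar: `T0` is `T(ε)`, `Tv v` is `T(v)`,
`Pu v` is `Push(v)` and `Pe v` is `Peek(v)`. -/
inductive StackNT (V : Type) : Type
  | T0 : StackNT V
  | Tv (v : V) : StackNT V
  | Pu (v : V) : StackNT V
  | Pe (v : V) : StackNT V
deriving DecidableEq

/-- Grammar symbols: nonterminals (left) or terminals (right). -/
abbrev GSym (V : Type) : Type := StackNT V ⊕ StackOp V

/-- Productions of the stack grammar. -/
inductive StackProd {V : Type} : StackNT V → List (GSym V) → Prop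
  | r1 (v : V) : StackProd StackNT.T0 [Sum.inl (StackNT.Pu v), Sum.inl (StackNT.Tv v)]
  | r2 (v : V) : StackProd (StackNT.Tv v) [Sum.inl (StackNT.Pe v), Sum.inl (StackNT.Tv v)]
  | r3 (v : V) : StackProd (StackNT.Tv v) [Sum.inl StackNT.T0, Sum.inl (StackNT.Tv v)]
  | r4 (v : V) : StackProd (StackNT.Tv v) [Sum.inr (StackOp.pop v)]
  | r5 (v : V) : StackProd (StackNT.Pu v) [Sum.inr (StackOp.push v)]
  | r6 (v : V) : StackProd (StackNT.Pe v) [Sum.inr (StackOp.peek v)]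

/-- One rewriting step of the stack grammar. -/
def StackStep {V : Type} (x y : List (GSym V)) : Prop :=
  ∃ (p s : List (GSym V)) (A : StackNT V) (rhs : List (GSym V)),
    StackProd A rhs ∧ x = p ++ Sum.inl A :: s ∧ y = p ++ rhs ++ s

/-- Derivation relation `→*` of the stack grammar. -/
def StackDerives {V : Type} : List (GSym V) → List (GSym V) → Prop :=
  Relation.ReflTransGen StackStep

/-- The language of the stack grammar: strings of terminals derivable from
the start symbol `T(ε)`. -/
def StackLang (V : Type) : Set (List (StackOp V)) :=
  {w | StackDerives [Sum.inl StackNT.T0] (w.map Sum.inr)}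

/-- Methods of the stack data type. -/
inductive StackMethod : Type
  | push : StackMethod
  | pop : StackMethod
  | peek : StackMethod
deriving DecidableEq

/-- The stack symbol `m(o)(v(o))` of an operation. -/
def absStackOp {V : Type} (o : Operation StackMethod V) : StackOp V :=
  match o.method with
  | StackMethod.push => StackOp.push o.value
  | StackMethod.pop => StackOp.pop o.value
  | StackMethod.peek => StackOp.peek o.value

/-- The nonterminal directly matching a single operation:
a `push v` yields `Push(v)`, a `peek v` yields `Peek(v)`, and a `pop v`
yields `T(v)`. -/
def baseNT {V : Type} (m : StackMethod) (v : V) : StackNT V :=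
  match m with
  | StackMethod.push => StackNT.Pu v
  | StackMethod.pop => StackNT.Tv v
  | StackMethod.peek => StackNT.Pe v

/-- The production table `M` of a stack history `H`:
`MRel H S1 S2 P` means `P ∈ M(S1, S2)`. -/
inductive MRel {V : Type} [DecidableEq V] (H : Finset (Operation StackMethod V)) :
    Finset (Operation StackMethod V) → Finset (Operation StackMethod V) →
      StackNT V → Prop
  | base (S1 : Finset (Operation StackMethod V)) (o : Operation StackMethod V)
      (h1 : IsPartitionState H S1) (h2 : IsPartitionState H (insert o S1))
      (ho : o ∈ H) (hno : o ∉ S1) :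
      MRel H S1 (insert o S1) (baseNT o.method o.value)
  | step (S1 S2 S3 : Finset (Operation StackMethod V)) (P L R : StackNT V)
      (h13 : S1 ⊂ S3) (h32 : S3 ⊂ S2)
      (h3 : IsPartitionState H S3)
      (hL : MRel H S1 S3 L) (hR : MRel H S3 S2 R)
      (hP : StackProd P [Sum.inl L, Sum.inl R]) :
      MRel H S1 S2 P

/-- A stack history is well-matched if, for every value `v`, it has as many
`push(v)` operations as `pop(v)` operations. -/
def WellMatched {V : Type} [DecidableEq V] (H : Finset (Operation StackMethod V)) : Prop :=
  ∀ v : V,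
    (H.filter (fun o => o.method = StackMethod.push ∧ o.value = v)).card =
    (H.filter (fun o => o.method = StackMethod.pop ∧ o.value = v)).card

/-! Any two operations that can each extend a partition state `S` by one step overlap in time: if
`insert o' S` is cut at time `t`, then `o`, still outside it, did not respond before `t`, and `o'`,
inside it, was invoked no later than `t`. Likewise for operations that can each be removed as the last
step of `S`. Pairwise overlapping operations are all pending at the latest invocation among them, so
there are at most `k` of them. A `Push(v)` or `Peek(v)` in `M(S1, S2)` only arises from such a
one-step extension of `S1`, and a derivation of `T(v)` ending at `S1` ends, along its rightmost
branch, with a `pop(v)` that is a removable last step of `S1`. -/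

section Concurrency

variable {M V : Type} [DecidableEq M] [DecidableEq V]

lemma card_le_concurrency_of_forall_tinv_le_tres {H F : Finset (Operation M V)} (hF : F ⊆ H)
    (hov : ∀ o ∈ F, ∀ o' ∈ F, o.tinv ≤ o'.tres) :
    F.card ≤ concurrency H := by
  rcases F.eq_empty_or_nonempty with rfl | hne
  · simp
  obtain ⟨o₀, ho₀, ht⟩ := F.exists_mem_eq_sup' hne (fun o => o.tinv)
  set t := F.sup' hne (fun o => o.tinv)
  have htH : t ∈ histTimes H :=
    Finset.mem_union_left _ (Finset.mem_image.mpr ⟨o₀, hF ho₀, ht.symm⟩)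
  have hpending : F ⊆ H.filter (fun o => o.tinv ≤ t ∧ t ≤ o.tres) := fun o ho =>
    Finset.mem_filter.mpr ⟨hF ho, Finset.le_sup' _ ho, ht ▸ hov o₀ ho₀ o ho⟩
  calc F.card ≤ (H.filter (fun o => o.tinv ≤ t ∧ t ≤ o.tres)).card := Finset.card_le_card hpending
    _ ≤ concurrency H :=
      Finset.le_sup (f := fun t => (H.filter (fun o => o.tinv ≤ t ∧ t ≤ o.tres)).card) htH

open Classical in
noncomputable def extensions (H S : Finset (Operation M V)) : Finset (Operation M V) :=
  H.filter (fun o => o ∉ S ∧ IsPartitionState H (insert o S))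

open Classical in
noncomputable def retractions (H S : Finset (Operation M V)) : Finset (Operation M V) :=
  H.filter (fun o => o ∈ S ∧ IsPartitionState H (S.erase o))

@[simp]
lemma mem_extensions {H S : Finset (Operation M V)} {o : Operation M V} :
    o ∈ extensions H S ↔ o ∈ H ∧ o ∉ S ∧ IsPartitionState H (insert o S) := by
  classical
  exact Finset.mem_filter

@[simp]
lemma mem_retractions {H S : Finset (Operation M V)} {o : Operation M V} :
    o ∈ retractions H S ↔ o ∈ H ∧ o ∈ S ∧ IsPartitionState H (S.erase o) := by
  classical
  exact Finset.mem_filter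

lemma tinv_le_tres_of_mem_extensions {H S : Finset (Operation M V)} (hwf : WellFormed H)
    {o o' : Operation M V} (ho : o ∈ extensions H S) (ho' : o' ∈ extensions H S) :
    o.tinv ≤ o'.tres := by
  rw [mem_extensions] at ho ho'
  obtain ⟨hoH, -, -, t, hcut⟩ := ho
  obtain ⟨ho'H, ho'S, -⟩ := ho'
  by_cases heq : o' = o
  · exact heq ▸ (hwf o hoH).le
  have hinv : o.tinv ≤ t := not_lt.mp fun h => (hcut o hoH).2 h (Finset.mem_insert_self o S)
  have hres : t ≤ o'.tres := not_lt.mp fun h =>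
    (Finset.mem_insert.mp ((hcut o' ho'H).1 h)).elim heq ho'S
  exact hinv.trans hres

lemma tinv_le_tres_of_mem_retractions {H S : Finset (Operation M V)} (hwf : WellFormed H)
    {o o' : Operation M V} (ho : o ∈ retractions H S) (ho' : o' ∈ retractions H S) :
    o.tinv ≤ o'.tres := by
  rw [mem_retractions] at ho ho'
  obtain ⟨hoH, hoS, -⟩ := ho
  obtain ⟨ho'H, -, -, t, hcut⟩ := ho'
  by_cases heq : o = o'
  · exact heq ▸ (hwf o hoH).le
  have hinv : o.tinv ≤ t := not_lt.mp fun h =>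
    (hcut o hoH).2 h (Finset.mem_erase.mpr ⟨heq, hoS⟩)
  have hres : t ≤ o'.tres := not_lt.mp fun h =>
    Finset.notMem_erase o' S ((hcut o' ho'H).1 h)
  exact hinv.trans hres

lemma card_extensions_le_concurrency {H : Finset (Operation M V)} (hwf : WellFormed H)
    (S : Finset (Operation M V)) : (extensions H S).card ≤ concurrency H :=
  card_le_concurrency_of_forall_tinv_le_tres (fun _ ho => (mem_extensions.mp ho).1)
    fun _ ho _ ho' => tinv_le_tres_of_mem_extensions hwf ho ho'

lemma card_retractions_le_concurrency {H : Finset (Operation M V)} (hwf : WellFormed H)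
    (S : Finset (Operation M V)) : (retractions H S).card ≤ concurrency H :=
  card_le_concurrency_of_forall_tinv_le_tres (fun _ ho => (mem_retractions.mp ho).1)
    fun _ ho _ ho' => tinv_le_tres_of_mem_retractions hwf ho ho'

end Concurrency

namespace MRel

variable {V : Type} [DecidableEq V] {H : Finset (Operation StackMethod V)}

lemma exists_mem_extensions_of_pu_or_pe {S1 S2 : Finset (Operation StackMethod V)}
    {P : StackNT V} (h : MRel H S1 S2 P) (hP : ∃ v, P = StackNT.Pu v ∨ P = StackNT.Pe v) :
    ∃ o ∈ extensions H S1, baseNT o.method o.value = P := by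
  cases h with
  | base _ o _ hins hoH hoS => exact ⟨o, mem_extensions.mpr ⟨hoH, hoS, hins⟩, rfl⟩
  | step _ _ _ _ _ _ _ _ _ _ _ hprod => obtain ⟨v, hv | hv⟩ := hP <;> cases hprod <;> cases hv

lemma exists_mem_retractions_of_tv {S1 S2 : Finset (Operation StackMethod V)}
    {P : StackNT V} (h : MRel H S1 S2 P) {v : V} (hP : P = StackNT.Tv v) :
    ∃ o ∈ retractions H S2, o.value = v := by
  induction h with
  | base S o hS _ hoH hoS =>
    cases hm : o.method <;> simp only [baseNT, hm, reduceCtorEq, StackNT.Tv.injEq] at hP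
    refine ⟨o, mem_retractions.mpr ⟨hoH, Finset.mem_insert_self o S, ?_⟩, hP⟩
    rwa [Finset.erase_insert hoS]
  | step _ _ _ _ _ _ _ _ _ _ _ hprod _ ihR => subst hP; cases hprod <;> exact ihR rfl

end MRel

lemma Set.finite_and_ncard_le_of_subset_finset {α : Type*} {s : Set α} {t : Finset α}
    (h : s ⊆ t) : s.Finite ∧ s.ncard ≤ t.card :=
  ⟨t.finite_toSet.subset h, Set.ncard_coe_finset t ▸ Set.ncard_le_ncard h t.finite_toSet⟩

theorem stmt15_general {V : Type} [DecidableEq V]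
    (H : Finset (Operation StackMethod V)) (hwf : WellFormed H)
    (k : ℕ) (hk : k = concurrency H)
    (S1 : Finset (Operation StackMethod V)) :
    ({P : StackNT V | (P = StackNT.T0 ∨ ∃ v, P = StackNT.Pu v ∨ P = StackNT.Pe v) ∧
        ∃ S2, S1 ⊂ S2 ∧ MRel H S1 S2 P}.Finite ∧
      {P : StackNT V | (P = StackNT.T0 ∨ ∃ v, P = StackNT.Pu v ∨ P = StackNT.Pe v) ∧
        ∃ S2, S1 ⊂ S2 ∧ MRel H S1 S2 P}.ncard ≤ k + 1) ∧
    ({P : StackNT V | (∃ v, P = StackNT.Tv v) ∧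
        ∃ S2, S2 ⊂ S1 ∧ MRel H S2 S1 P}.Finite ∧
      {P : StackNT V | (∃ v, P = StackNT.Tv v) ∧
        ∃ S2, S2 ⊂ S1 ∧ MRel H S2 S1 P}.ncard ≤ k) := by
  subst hk
  have hfront : {P : StackNT V | (P = StackNT.T0 ∨ ∃ v, P = StackNT.Pu v ∨ P = StackNT.Pe v) ∧
      ∃ S2, S1 ⊂ S2 ∧ MRel H S1 S2 P} ⊆
      ↑(insert StackNT.T0 ((extensions H S1).image fun o => baseNT o.method o.value)) := by
    rintro P ⟨rfl | hP, S2, -, hM⟩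
    · exact Finset.mem_insert_self _ _
    · obtain ⟨o, ho, rfl⟩ := hM.exists_mem_extensions_of_pu_or_pe hP
      exact Finset.mem_insert_of_mem (Finset.mem_image_of_mem _ ho)
  have hback : {P : StackNT V | (∃ v, P = StackNT.Tv v) ∧ ∃ S2, S2 ⊂ S1 ∧ MRel H S2 S1 P} ⊆
      ↑((retractions H S1).image fun o => StackNT.Tv o.value) := by
    rintro P ⟨⟨v, rfl⟩, S2, -, hM⟩
    obtain ⟨o, ho, rfl⟩ := hM.exists_mem_retractions_of_tv rfl
    exact Finset.mem_image_of_mem _ ho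
  obtain ⟨hfin₁, hcard₁⟩ := Set.finite_and_ncard_le_of_subset_finset hfront
  obtain ⟨hfin₂, hcard₂⟩ := Set.finite_and_ncard_le_of_subset_finset hback
  refine ⟨⟨hfin₁, hcard₁.trans ?_⟩, ⟨hfin₂, hcard₂.trans ?_⟩⟩
  · exact (Finset.card_insert_le _ _).trans
      (Nat.add_le_add_right (Finset.card_image_le.trans (card_extensions_le_concurrency hwf S1)) 1)
  · exact Finset.card_image_le.trans (card_retractions_le_concurrency hwf S1)

theorem stmt15 {V : Type} [DecidableEq V]
    (H : Finset (Operation StackMethod V)) (hne : H.Nonempty) (hwf : WellFormed H)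
    (hwm : WellMatched H) (k : ℕ) (hk : k = concurrency H)
    (S1 : Finset (Operation StackMethod V)) (hS1 : IsPartitionState H S1) :
    ({P : StackNT V | (P = StackNT.T0 ∨ ∃ v, P = StackNT.Pu v ∨ P = StackNT.Pe v) ∧
        ∃ S2, S1 ⊂ S2 ∧ MRel H S1 S2 P}.Finite ∧
      {P : StackNT V | (P = StackNT.T0 ∨ ∃ v, P = StackNT.Pu v ∨ P = StackNT.Pe v) ∧
        ∃ S2, S1 ⊂ S2 ∧ MRel H S1 S2 P}.ncard ≤ k + 1) ∧
    ({P : StackNT V | (∃ v, P = StackNT.Tv v) ∧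
        ∃ S2, S2 ⊂ S1 ∧ MRel H S2 S1 P}.Finite ∧
      {P : StackNT V | (∃ v, P = StackNT.Tv v) ∧
        ∃ S2, S2 ⊂ S1 ∧ MRel H S2 S1 P}.ncard ≤ k) :=
  stmt15_general H hwf k hk S1
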